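/- arXiv:hep-th/9610061 — 4 statements merged into one kernel-verified Lean document; each statement's English description precedes it below -/
import Mathlib

section
/- Let g : ℝ → ℂ be a Schwartz function whose Fourier transform ĝ vanishes for all k ≤ 0 (so g is the boundary value of a function analytic and bounded in the upper half-plane). Then for every x₀ ∈ ℝ, lim_{ε→0⁺} (1/(2πi)) ∫_ℝ g(x)/(x − x₀ − iε) dx = g(x₀). -/
open MeasureTheory Set Filter
open scoped ENNReal

/-- The Fourier transform `f̂(p) = (2π)^{-1/2} ∫ f(y) e^{-ipy} dy`. -/
noncomputable def ft (f : ℝ → ℂ) (p : ℝ) : ℂ :=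
  (Real.sqrt (2 * Real.pi) : ℂ)⁻¹ *
    ∫ y : ℝ, f y * Complex.exp (-Complex.I * (p : ℂ) * (y : ℂ))

/-- `F̌(k) = (2π)^{-1/2} ∫ f(y) e^{-ik x(y)} dy`. -/
noncomputable def Fk (x : ℝ → ℝ) (f : ℝ → ℂ) (k : ℝ) : ℂ :=
  (Real.sqrt (2 * Real.pi) : ℂ)⁻¹ *
    ∫ y : ℝ, f y * Complex.exp (-Complex.I * (k : ℂ) * (x y : ℂ))

/-- The relativistic black-hole coordinate map `x_R(y) = -e^{-y}`. -/
noncomputable def xR (y : ℝ) : ℝ := -Real.exp (-y)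

/-- The CGHS black-hole coordinate map `x_C(y) = -log(1+e^{-y})`. -/
noncomputable def xC (y : ℝ) : ℝ := -Real.log (1 + Real.exp (-y))

/-- The mean number of spontaneously created particles `N̄_o[f]`. -/
noncomputable def No (x : ℝ → ℝ) (f : ℝ → ℂ) : ℝ≥0∞ :=
  ∫⁻ k in Set.Ioi (0:ℝ), ENNReal.ofReal (‖Fk x f (-k)‖ ^ 2 / (2 * k))

/-- The thermal mean particle number `N̄^Th_β[f]` at inverse temperature `β`. -/
noncomputable def Nth (β : ℝ) (f : ℝ → ℂ) : ℝ≥0∞ :=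
  ∫⁻ p in Set.Ioi (0:ℝ),
    ENNReal.ofReal (‖ft f p‖ ^ 2 / (2 * p * (Real.exp (β * p) - 1)))

/-- translate of `f` by `y₀`. -/
noncomputable def tr (f : ℝ → ℂ) (y₀ : ℝ) : ℝ → ℂ := fun y => f (y - y₀)

/-! For `0 < Im z` the Cauchy kernel is a Laplace transform,
`1 / (2πi (x - z)) = ∫_{ξ > 0} e^{2πi ξ (z - x)} dξ`, so by Fubini the Cauchy integral of `g` is
`∫_{ξ > 0} e^{2πi ξ z} 𝓕g(ξ) dξ`, with Mathlib's normalization `𝓕g(ξ) = ∫ e^{-2πi x ξ} g(x) dx`.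
As `z = x₀ + iε → x₀`, dominated convergence (the factor `e^{-2πεξ}` is at most `1` for `ξ > 0`)
gives `∫_{ξ > 0} e^{2πi ξ x₀} 𝓕g(ξ) dξ`. Since `𝓕g` vanishes for `ξ ≤ 0`, this is the inverse
Fourier transform of `𝓕g` at `x₀`, which is `g x₀` by Fourier inversion. -/

open Complex Real
open scoped FourierTransform Topology

lemma ft_eq_fourier (f : ℝ → ℂ) (k : ℝ) :
    ft f k = ((√(2 * π) : ℝ) : ℂ)⁻¹ * 𝓕 f (k / (2 * π)) := by
  rw [ft, Real.fourier_real_eq_integral_exp_smul]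
  congr 2 with y
  rw [smul_eq_mul, mul_comm]
  congr 2
  push_cast
  field_simp

lemma norm_cexp_two_pi_I_mul (w : ℂ) (ξ : ℝ) :
    ‖cexp (2 * π * I * w * ξ)‖ = rexp (-(2 * π * w.im * ξ)) := by
  rw [Complex.norm_exp]
  congr 1
  simp [Complex.mul_re, Complex.mul_im]

lemma integral_Ioi_cexp_two_pi_I_mul {w : ℂ} (hw : 0 < w.im) :
    ∫ ξ in Ioi (0 : ℝ), cexp (2 * π * I * w * ξ) = -(2 * π * I * w)⁻¹ := by
  have hre : (2 * π * I * w).re = -(2 * π * w.im) := by simp [Complex.mul_re]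
  rw [integral_exp_mul_complex_Ioi (by rw [hre]; exact neg_neg_of_pos (by positivity)) 0]
  simp [neg_div]

theorem integral_div_sub_eq_integral_Ioi_fourier {g : ℝ → ℂ} (hg : Integrable g) {z : ℂ}
    (hz : 0 < z.im) :
    1 / (2 * π * I) * ∫ x : ℝ, g x / (x - z) =
      ∫ ξ in Ioi (0 : ℝ), cexp (2 * π * I * z * ξ) * 𝓕 g ξ := by
  set F : ℝ → ℝ → ℂ := fun x ξ => g x * cexp (2 * π * I * (z - x) * ξ) with hF
  have hkernel (x : ℝ) : 1 / (2 * π * I) * (g x / (x - z)) = ∫ ξ in Ioi (0 : ℝ), F x ξ := by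
    rw [integral_const_mul, integral_Ioi_cexp_two_pi_I_mul (by simpa using hz), ← neg_sub z,
      div_neg, mul_inv]
    ring
  have hF_int : Integrable (Function.uncurry F) (volume.prod (volume.restrict (Ioi 0))) := by
    have hexp := exp_neg_integrableOn_Ioi 0 (by positivity : 0 < 2 * π * z.im)
    refine (hg.norm.mul_prod hexp).mono' ?_ ?_
    · exact hg.aestronglyMeasurable.comp_fst.mul (by fun_prop : Continuous fun p : ℝ × ℝ =>
        cexp (2 * π * I * (z - p.1) * p.2)).aestronglyMeasurable
    · filter_upwards with ⟨x, ξ⟩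
      simp [hF, norm_cexp_two_pi_I_mul]
  have hinner (ξ : ℝ) : ∫ x, F x ξ = cexp (2 * π * I * z * ξ) * 𝓕 g ξ := by
    rw [Real.fourier_real_eq_integral_exp_smul, ← integral_const_mul]
    congr 1 with x
    simp only [hF, smul_eq_mul]
    rw [← mul_assoc, ← Complex.exp_add, mul_comm _ (g x)]
    congr 2
    push_cast
    ring
  rw [← integral_const_mul]
  simp_rw [hkernel, integral_integral_swap hF_int, hinner]

theorem tendsto_integral_Ioi_cexp_mul {G : ℝ → ℂ} (hG : IntegrableOn G (Ioi 0)) (x₀ : ℝ) :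
    Tendsto (fun ε : ℝ => ∫ ξ in Ioi (0 : ℝ), cexp (2 * π * I * (x₀ + I * ε) * ξ) * G ξ)
      (𝓝[>] 0) (𝓝 (∫ ξ in Ioi (0 : ℝ), cexp (2 * π * I * x₀ * ξ) * G ξ)) := by
  refine tendsto_integral_filter_of_dominated_convergence (fun ξ => ‖G ξ‖) ?_ ?_ hG.norm ?_
  · refine Eventually.of_forall fun ε => .mul ?_ hG.aestronglyMeasurable
    exact (by fun_prop : Continuous fun ξ : ℝ => cexp (2 * π * I * (x₀ + I * ε) * ξ))
      |>.aestronglyMeasurable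
  · filter_upwards [self_mem_nhdsWithin] with ε (hε : 0 < ε)
    filter_upwards [ae_restrict_mem measurableSet_Ioi] with ξ (hξ : 0 < ξ)
    rw [norm_mul, norm_cexp_two_pi_I_mul]
    refine mul_le_of_le_one_left (norm_nonneg _) (Real.exp_le_one_iff.2 ?_)
    simp only [add_im, ofReal_im, mul_im, I_re, ofReal_re, I_im]
    have := mul_pos (mul_pos pi_pos hε) hξ
    linarith
  · refine Eventually.of_forall fun ξ => ?_
    have hcont : Continuous fun ε : ℝ => cexp (2 * π * I * (x₀ + I * ε) * ξ) * G ξ := by fun_prop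
    simpa using (hcont.tendsto 0).mono_left nhdsWithin_le_nhds

theorem integral_Ioi_cexp_mul_fourier_eq_self {g : ℝ → ℂ} (hg : Integrable g)
    (hFg : Integrable (𝓕 g)) {x₀ : ℝ} (hx₀ : ContinuousAt g x₀) (hsupp : ∀ ξ ≤ 0, 𝓕 g ξ = 0) :
    ∫ ξ in Ioi (0 : ℝ), cexp (2 * π * I * x₀ * ξ) * 𝓕 g ξ = g x₀ := by
  rw [setIntegral_eq_integral_of_forall_compl_eq_zero fun ξ hξ => by
    simp [hsupp ξ (not_lt.1 hξ)], ← hg.fourierInv_fourier_eq hFg hx₀, Real.fourierInv_eq']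
  congr 1 with ξ
  rw [smul_eq_mul]
  congr 2
  simp only [RCLike.inner_apply, ringHom_apply, ofReal_mul, ofReal_ofNat]
  ring

theorem tendsto_integral_div_sub_of_fourier_eq_zero {g : ℝ → ℂ} (hg : Integrable g)
    (hFg : Integrable (𝓕 g)) {x₀ : ℝ} (hx₀ : ContinuousAt g x₀) (hsupp : ∀ ξ ≤ 0, 𝓕 g ξ = 0) :
    Tendsto (fun ε : ℝ => 1 / (2 * π * I) * ∫ x : ℝ, g x / (x - x₀ - I * ε))
      (𝓝[>] 0) (𝓝 (g x₀)) := by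
  rw [← integral_Ioi_cexp_mul_fourier_eq_self hg hFg hx₀ hsupp]
  refine (tendsto_integral_Ioi_cexp_mul hFg.integrableOn x₀).congr' ?_
  filter_upwards [self_mem_nhdsWithin] with ε (hε : 0 < ε)
  simp_rw [sub_sub]
  exact (integral_div_sub_eq_integral_Ioi_fourier hg (by simpa using hε)).symm

/-- Cauchy–Plemelj formula for positive-frequency functions: if `g` is a
Schwartz function with `ĝ(k) = 0` for all `k ≤ 0`, then for every `x₀ ∈ ℝ`,
`lim_{ε→0⁺} (1/(2πi)) ∫ g(x)/(x - x₀ - iε) dx = g(x₀)`. -/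
theorem stmt_5 (g : SchwartzMap ℝ ℂ) (hg : ∀ k : ℝ, k ≤ 0 → ft (⇑g) k = 0)
    (x₀ : ℝ) :
    Filter.Tendsto
      (fun ε : ℝ => (1 / (2 * (Real.pi : ℂ) * Complex.I)) *
        ∫ x : ℝ, g x / ((x : ℂ) - (x₀ : ℂ) - Complex.I * (ε : ℂ)))
      (nhdsWithin 0 (Set.Ioi 0)) (nhds (g x₀)) := by
  have hsupp (ξ : ℝ) (hξ : ξ ≤ 0) : 𝓕 (⇑g) ξ = 0 := by
    have h := hg (2 * π * ξ) (mul_nonpos_of_nonneg_of_nonpos (by positivity) hξ)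
    rwa [ft_eq_fourier, mul_div_cancel_left₀ _ (by positivity), mul_eq_zero,
      or_iff_right (by simp [pi_pos.le, pi_ne_zero])] at h
  exact tendsto_integral_div_sub_of_fourier_eq_zero g.integrable (𝓕 g).integrable
    g.continuous.continuousAt hsupp
end

section
/- Let x = x_C be the CGHS map x_C(y) = −log(1 + e^{−y}) (which satisfies 0 < x′(y) < 1 for all y ∈ ℝ). Let g : ℝ → ℂ be a Schwartz function with ĝ(k) = 0 for all k ≤ 0 and ∫_ℝ |g(x)|² dx = 1. Then 0 < ∫_ℝ x′(y)² |g(x(y))|² dy < 1. Interpreted in terms of energies, the outgoing energy E_g^{out} = E_o^{out} + ½∫_ℝ x′(y)²|g(x(y))|² dy of the radiation stimulated by the one-particle state Ω_g satisfies E_o^{out} < E_g^{out} < E_o^{out} + E_g^{in}, where E_g^{in} = ½∫_ℝ |g(x)|² dx. -/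
/-!
Since `0 < x' < 1`, we have `x'² < x'`, and by the change of variables `x = x_C(y)`,
`∫ x'(y) |g(x(y))|² dy = ∫_{x < 0} |g|² ≤ 1`. Both strict inequalities only need `g` not to
vanish identically on `(-∞, 0)`. If it did, `g` would be supported in `[0, ∞)` with spectrum in
`(0, ∞)`, which forces `g = 0` (F. and M. Riesz): the Laplace transform `∫ g(y) e^{-wy} dy` is
bounded and holomorphic on the right half-plane and vanishes on the lower half of the imaginary
axis, hence identically, so `ĝ = 0`.
-/

open MeasureTheory Set Filter
open scoped ENNReal

section ChangeOfVariables

variable {x q : ℝ → ℝ}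

theorem integrable_deriv_mul_comp (hx : Differentiable ℝ x) (hpos : ∀ y, 0 < deriv x y)
    (hq : IntegrableOn q (range x)) : Integrable fun y => deriv x y * q (x y) := by
  have hx' : ∀ y ∈ univ, HasDerivWithinAt x (deriv x y) univ y :=
    fun y _ => (hx y).hasDerivAt.hasDerivWithinAt
  rw [← image_univ, integrableOn_image_iff_integrableOn_abs_deriv_smul MeasurableSet.univ hx'
    (strictMono_of_deriv_pos hpos).injective.injOn, integrableOn_univ] at hq
  simpa only [abs_of_pos (hpos _), smul_eq_mul] using hq

theorem integral_deriv_mul_comp (hx : Differentiable ℝ x) (hpos : ∀ y, 0 < deriv x y) :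
    ∫ y, deriv x y * q (x y) = ∫ t in range x, q t := by
  have hx' : ∀ y ∈ univ, HasDerivWithinAt x (deriv x y) univ y :=
    fun y _ => (hx y).hasDerivAt.hasDerivWithinAt
  rw [← image_univ, integral_image_eq_integral_abs_deriv_smul MeasurableSet.univ hx'
    (strictMono_of_deriv_pos hpos).injective.injOn, setIntegral_univ]
  simp only [abs_of_pos (hpos _), smul_eq_mul]

theorem integral_deriv_sq_mul_comp_pos_lt (hx : Differentiable ℝ x)
    (hx' : Continuous (deriv x)) (hpos : ∀ y, 0 < deriv x y) (hlt : ∀ y, deriv x y < 1)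
    (hq : Continuous q) (hq₀ : ∀ t, 0 ≤ q t) (hqi : Integrable q) {y₀ : ℝ} (hy₀ : q (x y₀) ≠ 0) :
    0 < ∫ y, deriv x y ^ 2 * q (x y) ∧ ∫ y, deriv x y ^ 2 * q (x y) < ∫ t in range x, q t := by
  have hqx : Continuous fun y => q (x y) := hq.comp hx.continuous
  have hψ := integrable_deriv_mul_comp hx hpos hqi.integrableOn
  have hle : ∀ y, deriv x y ^ 2 * q (x y) ≤ deriv x y * q (x y) := fun y => by
    gcongr
    · exact hq₀ _
    · nlinarith [hpos y, hlt y]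
  have hφ : Integrable fun y => deriv x y ^ 2 * q (x y) :=
    hψ.mono' ((hx'.pow 2).mul hqx).aestronglyMeasurable
      (Eventually.of_forall fun y => by
        rw [Real.norm_of_nonneg (mul_nonneg (sq_nonneg _) (hq₀ _))]; exact hle y)
  refine ⟨integral_pos_of_integrable_nonneg_nonzero ((hx'.pow 2).mul hqx) hφ
      (fun y => mul_nonneg (sq_nonneg _) (hq₀ _)) (x := y₀)
      (mul_ne_zero (pow_pos (hpos y₀) 2).ne' hy₀), ?_⟩
  rw [← integral_deriv_mul_comp hx hpos, ← sub_pos, ← integral_sub hψ hφ]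
  refine integral_pos_of_integrable_nonneg_nonzero ((hx'.mul hqx).sub ((hx'.pow 2).mul hqx))
    (hψ.sub hφ) (fun y => sub_nonneg.2 (hle y)) (x := y₀) ?_
  have : deriv x y₀ * q (x y₀) - deriv x y₀ ^ 2 * q (x y₀) =
      deriv x y₀ * (1 - deriv x y₀) * q (x y₀) := by ring
  rw [this]
  exact mul_ne_zero (mul_pos (hpos y₀) (sub_pos.2 (hlt y₀))).ne' hy₀

end ChangeOfVariables

theorem hasDerivAt_xC (y : ℝ) :
    HasDerivAt xC (Real.exp (-y) / (1 + Real.exp (-y))) y := by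
  have h := (((Real.hasDerivAt_exp (-y)).comp y (hasDerivAt_neg y)).const_add 1).log
    (by positivity : 1 + Real.exp (-y) ≠ 0)
  exact h.neg.congr_deriv (by simp [neg_div])

theorem deriv_xC : deriv xC = fun y => Real.exp (-y) / (1 + Real.exp (-y)) :=
  funext fun y => (hasDerivAt_xC y).deriv

theorem differentiable_xC : Differentiable ℝ xC := fun y => (hasDerivAt_xC y).differentiableAt

theorem continuous_deriv_xC : Continuous (deriv xC) := by
  rw [deriv_xC]
  exact Continuous.div (by fun_prop) (by fun_prop) fun y => by positivity

theorem deriv_xC_pos (y : ℝ) : 0 < deriv xC y := by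
  rw [deriv_xC]; positivity

theorem deriv_xC_lt_one (y : ℝ) : deriv xC y < 1 := by
  rw [deriv_xC, div_lt_one (by positivity)]
  linarith

theorem range_xC : range xC = Iio 0 := by
  ext x
  constructor
  · rintro ⟨y, rfl⟩
    exact neg_neg_of_pos <| Real.log_pos (lt_add_of_pos_right 1 (Real.exp_pos (-y)))
  · intro hx
    have h : 0 < Real.exp (-x) - 1 := by
      rw [sub_pos, Real.one_lt_exp_iff]; exact neg_pos.2 hx
    refine ⟨-Real.log (Real.exp (-x) - 1), ?_⟩
    simp [xC, Real.exp_log h]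

theorem mul_exp_neg_mul_le_inv {a : ℝ} (ha : 0 < a) (y : ℝ) : y * Real.exp (-(a * y)) ≤ a⁻¹ := by
  have h := (Real.mul_exp_neg_le_exp_neg_one (a * y)).trans (Real.exp_le_one_iff.2 (by norm_num))
  rwa [mul_assoc, ← le_inv_mul_iff₀ ha, mul_one] at h

open Complex in
noncomputable def laplaceTransform (u : ℝ → ℂ) (w : ℂ) : ℂ :=
  ∫ y : ℝ, u y * cexp (-(w * y))

namespace LaplaceTransform

open Complex Metric FourierTransform

variable {u : ℝ → ℂ}

theorem norm_cexp_neg_mul (w : ℂ) (y : ℝ) : ‖cexp (-(w * y))‖ = Real.exp (-(w.re * y)) := by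
  rw [norm_exp, neg_re, re_mul_ofReal]

theorem norm_integrand_le (hsupp : ∀ y < 0, u y = 0) {w : ℂ} (hw : 0 ≤ w.re) (y : ℝ) :
    ‖u y * cexp (-(w * y))‖ ≤ ‖u y‖ := by
  rcases lt_or_ge y 0 with hy | hy
  · simp [hsupp y hy]
  · rw [norm_mul, norm_cexp_neg_mul]
    exact mul_le_of_le_one_right (norm_nonneg _)
      (Real.exp_le_one_iff.2 (neg_nonpos.2 (mul_nonneg hw hy)))

theorem aestronglyMeasurable_integrand (hu : Integrable u) (w : ℂ) :
    AEStronglyMeasurable fun y : ℝ => u y * cexp (-(w * y)) :=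
  hu.aestronglyMeasurable.mul (Continuous.aestronglyMeasurable (by fun_prop))

theorem norm_le (hu : Integrable u) (hsupp : ∀ y < 0, u y = 0) {w : ℂ} (hw : 0 ≤ w.re) :
    ‖laplaceTransform u w‖ ≤ ∫ y, ‖u y‖ :=
  norm_integral_le_of_norm_le hu.norm (Eventually.of_forall (norm_integrand_le hsupp hw))

theorem continuousOn (hu : Integrable u) (hsupp : ∀ y < 0, u y = 0) :
    ContinuousOn (laplaceTransform u) {w | 0 ≤ w.re} :=
  continuousOn_of_dominated (fun w _ => aestronglyMeasurable_integrand hu w)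
    (fun _ hw => Eventually.of_forall (norm_integrand_le hsupp hw)) hu.norm
    (Eventually.of_forall fun _ => by fun_prop)

/-- Near `w₀` with `re w₀ > 0`, the `w`-derivative `-y u(y) e^{-wy}` is dominated by
`‖u y‖ / a` with `a = re w₀ / 2`, since `y e^{-ay} ≤ 1/a`. -/
theorem differentiableOn (hu : Integrable u) (hsupp : ∀ y < 0, u y = 0) :
    DifferentiableOn ℂ (laplaceTransform u) {w | 0 < w.re} := by
  intro w₀ hw₀
  set a := w₀.re / 2 with ha_def
  have ha : 0 < a := half_pos hw₀
  have hre : ∀ w ∈ ball w₀ a, a ≤ w.re := fun w hw => by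
    have := (abs_re_le_norm (w - w₀)).trans (mem_ball_iff_norm.1 hw).le
    rw [sub_re, abs_le] at this
    linarith [this.1]
  refine (hasDerivAt_integral_of_dominated_loc_of_deriv_le (ball_mem_nhds w₀ ha)
    (F' := fun w y => u y * (cexp (-(w * y)) * -y)) (bound := fun y => a⁻¹ * ‖u y‖)
    (Eventually.of_forall (aestronglyMeasurable_integrand hu))
    (hu.norm.mono' (aestronglyMeasurable_integrand hu w₀)
      (Eventually.of_forall (norm_integrand_le hsupp hw₀.le)))
    (hu.aestronglyMeasurable.mul (Continuous.aestronglyMeasurable (by fun_prop))) ?_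
    (hu.norm.const_mul _) ?_).2.differentiableAt.differentiableWithinAt
  · refine Eventually.of_forall fun y w hw => ?_
    rcases lt_or_ge y 0 with hy | hy
    · simp [hsupp y hy]
    rw [norm_mul, norm_mul, norm_cexp_neg_mul, norm_neg, norm_real, Real.norm_of_nonneg hy,
      mul_comm a⁻¹]
    gcongr
    calc Real.exp (-(w.re * y)) * y ≤ y * Real.exp (-(a * y)) := by
          rw [mul_comm]; gcongr; exact hre w hw
      _ ≤ a⁻¹ := mul_exp_neg_mul_le_inv ha y
  · refine Eventually.of_forall fun y w _ => ?_
    have h : HasDerivAt (fun w : ℂ => -(w * y)) (-y) w := (hasDerivAt_mul_const (y : ℂ)).fun_neg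
    exact h.cexp.const_mul (u y)

theorem diffContOnCl (hu : Integrable u) (hsupp : ∀ y < 0, u y = 0) :
    DiffContOnCl ℂ (laplaceTransform u) {w | 0 < w.re} :=
  ⟨differentiableOn hu hsupp, by rw [closure_setOfPred_lt_re]; exact continuousOn hu hsupp⟩

theorem ft_eq (u : ℝ → ℂ) (t : ℝ) :
    ft u t = (Real.sqrt (2 * Real.pi) : ℂ)⁻¹ * laplaceTransform u (t * I) := by
  unfold ft laplaceTransform
  congr 2 with y
  ring_nf

theorem fourier_eq (u : ℝ → ℂ) (w : ℝ) :
    𝓕 u w = laplaceTransform u ((2 * Real.pi * w : ℝ) * I) := by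
  rw [Real.fourier_real_eq_integral_exp_smul, laplaceTransform]
  congr 1 with y
  rw [smul_eq_mul, mul_comm]
  push_cast
  ring_nf

end LaplaceTransform

section RightHalfPlane

open Complex ComplexConjugate Topology

variable {F : ℂ → ℂ}

theorem DiffContOnCl.conj_comp_conj (hd : DiffContOnCl ℂ F {z | 0 < z.re}) :
    DiffContOnCl ℂ (conj ∘ F ∘ conj) {z | 0 < z.re} := by
  refine ⟨fun z hz => ?_, ?_⟩
  · have h := (hd.differentiableAt (isOpen_re_gt 0) (show 0 < (conj z).re from hz)).conj_conj
    rw [conj_conj] at h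
    exact h.differentiableWithinAt
  · have hc := hd.continuousOn
    rw [closure_setOfPred_lt_re] at hc ⊢
    exact continuous_conj.comp_continuousOn (hc.comp continuous_conj.continuousOn fun z hz => hz)

theorem eqOn_zero_of_eq_zero_on_pos_real (hd : DiffContOnCl ℂ F {z | 0 < z.re})
    (h0 : ∀ t : ℝ, 0 < t → F t = 0) : EqOn F 0 {z | 0 ≤ z.re} := by
  have hofReal : Tendsto ((↑) : ℝ → ℂ) (𝓝[≠] 1) (𝓝[≠] 1) := by
    refine tendsto_nhdsWithin_iff.2 ⟨?_, eventually_nhdsWithin_of_forall fun t ht => ?_⟩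
    · simpa using (continuous_ofReal.tendsto 1).mono_left nhdsWithin_le_nhds
    · exact ofReal_ne_one.2 ht
  have hfreq : ∃ᶠ z in 𝓝[≠] (1 : ℂ), F z = 0 :=
    hofReal.frequently ((eventually_nhdsWithin_of_eventually_nhds
      (eventually_gt_nhds one_pos)).mono h0).frequently
  have hopen : EqOn F 0 {z | 0 < z.re} :=
    (hd.1.analyticOnNhd (isOpen_re_gt 0)).eqOn_zero_of_preconnected_of_frequently_eq_zero
      (convex_halfSpace_re_gt 0).isPreconnected (by simp) hfreq
  simpa only [closure_setOfPred_lt_re] using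
    hopen.of_subset_closure hd.continuousOn continuousOn_const subset_closure Subset.rfl

/-- The product of `F` with its reflection `conj ∘ F ∘ conj` vanishes on the whole imaginary axis,
hence everywhere by Phragmén–Lindelöf; on the positive real axis that product is `|F|²`. -/
theorem eqOn_zero_of_bounded_of_eq_zero_on_neg_imag {C : ℝ}
    (hd : DiffContOnCl ℂ F {z | 0 < z.re}) (hC : ∀ z, 0 ≤ z.re → ‖F z‖ ≤ C)
    (h0 : ∀ t : ℝ, t ≤ 0 → F (t * I) = 0) : EqOn F 0 {z | 0 ≤ z.re} := by
  set Φ : ℂ → ℂ := fun z => F z * conj (F (conj z))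
  have hΦ : ∀ z, 0 ≤ z.re → ‖Φ z‖ ≤ C * C := fun z hz => by
    rw [norm_mul, RCLike.norm_conj]
    exact mul_le_mul (hC z hz) (hC _ hz) (norm_nonneg _) ((norm_nonneg _).trans (hC z hz))
  have hΦ0 : ∀ z, 0 ≤ z.re → ‖Φ z‖ ≤ 0 := fun z hz =>
    PhragmenLindelof.right_half_plane_of_bounded_on_real (hd.smul hd.conj_comp_conj)
      ⟨1, one_lt_two, 0, Asymptotics.IsBigO.of_bound (C * C) <| eventually_inf_principal.2 <|
        Eventually.of_forall fun z hz => by simpa using hΦ z (le_of_lt hz)⟩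
      (isBoundedUnder_of_eventually_le (a := C * C) <| eventually_atTop.2
        ⟨0, fun x hx => hΦ x (by simpa using hx)⟩)
      (fun t => by
        rcases le_total t 0 with ht | ht
        · simp [Φ, h0 t ht]
        · have h := h0 (-t) (neg_nonpos.2 ht)
          rw [ofReal_neg, neg_mul] at h
          simp [Φ, h])
      hz
  refine eqOn_zero_of_eq_zero_on_pos_real hd fun t ht => ?_
  have := norm_le_zero_iff.1 (hΦ0 t (by simpa using ht.le))
  simpa [Φ] using this

end RightHalfPlane

open Complex FourierTransform LaplaceTransform in
/-- A form of the F. and M. Riesz theorem. -/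
theorem eq_zero_of_ft_nonpos_eq_zero {u : ℝ → ℂ} (hc : Continuous u) (hu : Integrable u)
    (hsupp : ∀ y < 0, u y = 0) (hft : ∀ k ≤ 0, ft u k = 0) : u = 0 := by
  have hL : ∀ t : ℝ, t ≤ 0 → laplaceTransform u (t * I) = 0 := fun t ht => by
    have h := hft t ht
    rwa [ft_eq, mul_eq_zero, or_iff_right (inv_ne_zero (ofReal_ne_zero.2
      (Real.sqrt_pos.2 Real.two_pi_pos).ne'))] at h
  have hzero := eqOn_zero_of_bounded_of_eq_zero_on_neg_imag (diffContOnCl hu hsupp)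
    (fun _ => norm_le hu hsupp) hL
  have h𝓕 : 𝓕 u = 0 := funext fun w => by
    rw [fourier_eq]
    exact hzero (by simp)
  funext x
  rw [← hc.fourierInv_fourier_eq hu (by rw [h𝓕]; exact integrable_zero _ _ _), h𝓕,
    Real.fourierInv_eq]
  simp

/-- For the CGHS map (with `0 < x_C'(y) < 1`) and a Schwartz function `g`
of positive-frequency type with `∫ |g|² = 1`, one has
`0 < ∫ x'(y)²|g(x(y))|² dy < 1`; equivalently, the stimulated outgoing energy
`E_g^{out} = E_o^{out} + ½∫ x'(y)²|g(x(y))|² dy` satisfies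
`E_o^{out} < E_g^{out} < E_o^{out} + E_g^{in}` where `E_g^{in} = ½∫ |g|²`. -/
theorem stmt_6 (g : SchwartzMap ℝ ℂ) (hg : ∀ k : ℝ, k ≤ 0 → ft (⇑g) k = 0)
    (hnorm : (∫ x : ℝ, ‖g x‖ ^ 2) = 1) :
    (0 < ∫ y : ℝ, (deriv xC y) ^ 2 * ‖g (xC y)‖ ^ 2) ∧
    (∫ y : ℝ, (deriv xC y) ^ 2 * ‖g (xC y)‖ ^ 2) < 1 ∧
    ∀ Eo : ℝ,
      (Eo < Eo + (1/2) * ∫ y : ℝ, (deriv xC y) ^ 2 * ‖g (xC y)‖ ^ 2) ∧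
      (Eo + (1/2) * (∫ y : ℝ, (deriv xC y) ^ 2 * ‖g (xC y)‖ ^ 2) <
        Eo + (1/2) * ∫ x : ℝ, ‖g x‖ ^ 2) := by
  obtain ⟨x₀, hx₀, hgx₀⟩ : ∃ x < 0, g x ≠ 0 := by
    by_contra! h
    have hg0 : (g : ℝ → ℂ) = 0 := eq_zero_of_ft_nonpos_eq_zero g.continuous g.integrable h hg
    simp [hg0] at hnorm
  obtain ⟨y₀, rfl⟩ : x₀ ∈ range xC := range_xC ▸ hx₀
  have hqi : Integrable fun x => ‖g x‖ ^ 2 :=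
    (g.memLp ((2 : ℕ) : ℝ≥0∞)).integrable_norm_pow two_ne_zero
  obtain ⟨hpos, hlt⟩ := integral_deriv_sq_mul_comp_pos_lt differentiable_xC continuous_deriv_xC
    deriv_xC_pos deriv_xC_lt_one (by fun_prop) (fun _ => by positivity) hqi
    (pow_ne_zero 2 (norm_ne_zero_iff.2 hgx₀))
  have hle : ∫ x in range xC, ‖g x‖ ^ 2 ≤ 1 :=
    hnorm ▸ setIntegral_le_integral hqi (ae_of_all _ fun _ => by positivity)
  rw [hnorm]
  exact ⟨hpos, by linarith, fun Eo => ⟨by linarith, by linarith⟩⟩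
end

section
/- Let x be either the relativistic map x_R(y) = −e^{−y} or the CGHS map x_C(y) = −log(1 + e^{−y}). Let f be a normalized outgoing wave function with N̄_o[f] < ∞, and let g_cl be the classical incoming function, i.e. the function whose Fourier transform is ĝ_cl(k) = F̌(k)/‖Af̃‖ for k > 0 and 0 for k ≤ 0, where ‖Af̃‖² = ∫_0^∞ |F̌(k)|²/(2k) dk. Then 1 + N̄_o[f] ≤ N̄_{g_cl}[f]. -/
open MeasureTheory Set Filter
open scoped ENNReal

/-- `‖Af̃‖ = (∫_0^∞ |F̌(k)|²/(2k) dk)^{1/2}`. -/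
noncomputable def normA (x : ℝ → ℝ) (f : ℝ → ℂ) : ℝ :=
  Real.sqrt (∫ k in Set.Ioi (0:ℝ), ‖Fk x f k‖ ^ 2 / (2 * k))

/-- The Fourier transform of the classical incoming function:
`ĝ_cl(k) = F̌(k)/‖Af̃‖` for `k > 0` and `0` for `k ≤ 0`. -/
noncomputable def gclhat (x : ℝ → ℝ) (f : ℝ → ℂ) (k : ℝ) : ℂ :=
  if 0 < k then Fk x f k / ((normA x f : ℝ) : ℂ) else 0

/-
Write `‖A‖² = ∫₀^∞ |F̌(k)|²/(2k)` and `‖B‖² = N̄_o[f] = ∫₀^∞ |F̌(-k)|²/(2k)`. Regularising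
`1/(2k)` by `(e^{-k/t} - e^{-tk})/(2k)` and expanding `|F̌(±k)|²` as a double integral over
`(y, y')`, Fubini and `∫₀^∞ e^{-ak} sin(sk)/k dk = arctan(s/a)` turn the regularised
`‖A‖² - ‖B‖²` into an integral of `f̄(y) f(y')` against bounded functions of `x(y) - x(y')`
converging to `(π/4) sign(x(y) - x(y'))`. For strictly increasing `x` this is
`(π/4) sign(y - y')`, so the Bogoliubov defect `‖A‖² - ‖B‖²` does not depend on `x`; for
`x = id` the negative-frequency part of `f` vanishes and the normalisation gives `1`. Hence
`‖A‖² = 1 + N̄_o[f] < ∞`, and `|⟨g̃_cl, Af̃⟩|² = ‖A‖²` for `g_cl = F̌/‖A‖`.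
-/

open Topology ComplexConjugate

lemma integral_exp_mul_cos_Ioi {a : ℝ} (ha : 0 < a) (s : ℝ) :
    ∫ k in Ioi (0:ℝ), Real.exp (-a * k) * Real.cos (s * k) = a / (a ^ 2 + s ^ 2) := by
  have hre : (-a + s * Complex.I).re < 0 := by simp [ha]
  have hint := integrableOn_exp_mul_complex_Ioi hre 0
  have hcexp := integral_exp_mul_complex_Ioi hre 0
  have hre_int : ∫ k in Ioi (0:ℝ), Real.exp (-a * k) * Real.cos (s * k)
      = (∫ k in Ioi (0:ℝ), Complex.exp ((-a + s * Complex.I) * k)).re := by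
    rw [← RCLike.re_to_complex, ← integral_re hint]
    refine integral_congr_ae (Eventually.of_forall fun k => ?_)
    simp [Complex.exp_re]
  have hnormSq : Complex.normSq (-a + s * Complex.I) = a ^ 2 + s ^ 2 := by
    simp [Complex.normSq_apply]; ring
  rw [hre_int, hcexp]
  simp [Complex.div_re, hnormSq]

lemma integrableOn_exp_mul_sin_div_Ioi {a : ℝ} (ha : 0 < a) (s : ℝ) :
    IntegrableOn (fun k => Real.exp (-a * k) * (Real.sin (s * k) / k)) (Ioi 0) := by
  refine Integrable.mono' ((integrableOn_exp_mul_Ioi (neg_lt_zero.2 ha) 0).const_mul |s|)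
    (by fun_prop) ?_
  filter_upwards [ae_restrict_mem measurableSet_Ioi] with k (hk : 0 < k)
  rw [norm_mul, Real.norm_of_nonneg (Real.exp_pos _).le, norm_div, Real.norm_of_nonneg hk.le,
    mul_comm |s|]
  gcongr
  rw [div_le_iff₀ hk, Real.norm_eq_abs, ← abs_of_pos hk, ← abs_mul, abs_of_pos hk]
  exact Real.abs_sin_le_abs

lemma integral_exp_mul_sin_div_Ioi {a : ℝ} (ha : 0 < a) (s : ℝ) :
    ∫ k in Ioi (0:ℝ), Real.exp (-a * k) * (Real.sin (s * k) / k) = Real.arctan (s / a) := by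
  set φ : ℝ → ℝ := fun s => ∫ k in Ioi (0:ℝ), Real.exp (-a * k) * (Real.sin (s * k) / k)
  have hφ : ∀ t, HasDerivAt φ (a / (a ^ 2 + t ^ 2)) t := by
    intro t
    have h := hasDerivAt_integral_of_dominated_loc_of_deriv_le (x₀ := t)
      (μ := volume.restrict (Ioi 0))
      (F := fun u k => Real.exp (-a * k) * (Real.sin (u * k) / k))
      (F' := fun u k => Real.exp (-a * k) * Real.cos (u * k))
      (Metric.ball_mem_nhds t one_pos) (Eventually.of_forall fun u => by fun_prop)
      (integrableOn_exp_mul_sin_div_Ioi ha t) (by fun_prop)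
      (Eventually.of_forall fun k u _ => ?_) (integrableOn_exp_mul_Ioi (neg_lt_zero.2 ha) 0) ?_
    · rw [integral_exp_mul_cos_Ioi ha t] at h
      exact h.2
    · rw [norm_mul, Real.norm_of_nonneg (Real.exp_pos _).le]
      exact mul_le_of_le_one_right (Real.exp_pos _).le (Real.abs_cos_le_one _)
    · filter_upwards [ae_restrict_mem measurableSet_Ioi] with k (hk : 0 < k) u _
      have h := ((hasDerivAt_mul_const (x := u) k).sin.div_const k).const_mul (Real.exp (-a * k))
      rwa [mul_div_assoc, div_self hk.ne', mul_one] at h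
  have harctan : ∀ t, HasDerivAt (fun u => Real.arctan (u / a)) (a / (a ^ 2 + t ^ 2)) t := by
    intro t
    convert ((hasDerivAt_id' t).div_const a).arctan using 1
    field_simp
  have hdiff : ∀ u, HasDerivAt (fun u => φ u - Real.arctan (u / a)) 0 u := fun u => by
    have h := (hφ u).sub (harctan u)
    rwa [sub_self] at h
  have hconst := is_const_of_deriv_eq_zero (fun u => (hdiff u).differentiableAt)
    (fun u => (hdiff u).deriv) s 0
  simpa [φ, sub_eq_zero] using hconst

lemma abs_arctan_sub_arctan_lt_pi (a b : ℝ) : |Real.arctan a - Real.arctan b| < Real.pi := by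
  rw [abs_lt]
  constructor <;> linarith [Real.arctan_lt_pi_div_two a, Real.neg_pi_div_two_lt_arctan a,
    Real.arctan_lt_pi_div_two b, Real.neg_pi_div_two_lt_arctan b]

lemma tendsto_arctan_mul_sub_arctan_div (s : ℝ) :
    Tendsto (fun t => (Real.arctan (s * t) - Real.arctan (s / t)) / 2) atTop
      (𝓝 (Real.pi / 4 * Real.sign s)) := by
  have hdiv : Tendsto (fun t => Real.arctan (s / t)) atTop (𝓝 0) := by
    have h := (Real.continuous_arctan.tendsto 0).comp
      (tendsto_const_nhds (x := s).div_atTop tendsto_id)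
    rwa [Real.arctan_zero] at h
  rcases lt_trichotomy s 0 with hs | rfl | hs
  · have hmul := (tendsto_nhds_of_tendsto_nhdsWithin Real.tendsto_arctan_atBot).comp
      (tendsto_id.const_mul_atTop_of_neg hs)
    rw [Real.sign_of_neg hs, show Real.pi / 4 * -1 = (-(Real.pi / 2) - 0) / 2 by ring]
    exact (hmul.sub hdiv).div_const 2
  · simp
  · have hmul := (tendsto_nhds_of_tendsto_nhdsWithin Real.tendsto_arctan_atTop).comp
      (tendsto_id.const_mul_atTop hs)
    rw [Real.sign_of_pos hs, show Real.pi / 4 * 1 = (Real.pi / 2 - 0) / 2 by ring]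
    exact (hmul.sub hdiv).div_const 2

/-- `expKernel t k = ½ ∫_{1/t}^{t} e^{-uk} du`, which increases to `1/(2k)` as `t → ∞`. -/
noncomputable def expKernel (t k : ℝ) : ℝ :=
  (Real.exp (-t⁻¹ * k) - Real.exp (-t * k)) / (2 * k)

section expKernel

variable {s t k : ℝ}

lemma expKernel_nonneg (ht : 1 ≤ t) (hk : 0 < k) : 0 ≤ expKernel t k := by
  have : t⁻¹ ≤ t := (inv_le_one_of_one_le₀ ht).trans ht
  exact div_nonneg (sub_nonneg.2 (Real.exp_le_exp.2 (by nlinarith))) (by positivity)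

lemma expKernel_mono (hs : 0 < s) (hst : s ≤ t) (hk : 0 < k) :
    expKernel s k ≤ expKernel t k := by
  have : t⁻¹ ≤ s⁻¹ := inv_anti₀ hs hst
  refine div_le_div_of_nonneg_right (sub_le_sub ?_ ?_) (by positivity) <;>
    exact Real.exp_le_exp.2 (by nlinarith)

lemma expKernel_le (ht : 0 < t) (hk : 0 < k) :
    expKernel t k ≤ t / 2 * Real.exp (-t⁻¹ * k) := by
  have hgap : Real.exp (-t * k) = Real.exp (-t⁻¹ * k) * Real.exp (-((t - t⁻¹) * k)) := by
    rw [← Real.exp_add]; ring_nf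
  have hexp : 1 - Real.exp (-((t - t⁻¹) * k)) ≤ t * k := by
    nlinarith [Real.add_one_le_exp (-((t - t⁻¹) * k)), inv_pos.2 ht]
  rw [expKernel, div_le_iff₀ (by positivity), hgap]
  nlinarith [mul_le_mul_of_nonneg_left hexp (Real.exp_pos (-t⁻¹ * k)).le]

lemma tendsto_expKernel (hk : 0 < k) :
    Tendsto (fun t => expKernel t k) atTop (𝓝 (1 / (2 * k))) := by
  have h₁ : Tendsto (fun t : ℝ => Real.exp (-t⁻¹ * k)) atTop (𝓝 1) := by
    simpa using (tendsto_inv_atTop_zero.neg.mul_const k).rexp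
  have h₂ : Tendsto (fun t : ℝ => Real.exp (-t * k)) atTop (𝓝 0) :=
    Real.tendsto_exp_atBot.comp (tendsto_neg_atTop_atBot.atBot_mul_const hk)
  simpa [expKernel] using (h₁.sub h₂).div_const (2 * k)

lemma measurable_expKernel : Measurable (expKernel t) := by
  unfold expKernel; fun_prop

lemma integrableOn_expKernel (ht : 1 ≤ t) : IntegrableOn (expKernel t) (Ioi 0) := by
  have ht₀ : 0 < t := one_pos.trans_le ht
  refine Integrable.mono' ((integrableOn_exp_mul_Ioi (neg_lt_zero.2 (inv_pos.2 ht₀)) 0).const_mul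
    (t / 2)) measurable_expKernel.aestronglyMeasurable ?_
  filter_upwards [ae_restrict_mem measurableSet_Ioi] with k (hk : 0 < k)
  rw [Real.norm_of_nonneg (expKernel_nonneg ht hk)]
  exact expKernel_le ht₀ hk

lemma integral_expKernel_mul_sin (ht : 0 < t) (s : ℝ) :
    ∫ k in Ioi (0:ℝ), expKernel t k * Real.sin (s * k)
      = (Real.arctan (s * t) - Real.arctan (s / t)) / 2 := by
  have hsplit : ∀ k ∈ Ioi (0:ℝ), expKernel t k * Real.sin (s * k)
      = (Real.exp (-t⁻¹ * k) * (Real.sin (s * k) / k)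
        - Real.exp (-t * k) * (Real.sin (s * k) / k)) / 2 := by
    intro k (hk : 0 < k)
    rw [expKernel]
    field_simp
  rw [setIntegral_congr_fun measurableSet_Ioi hsplit, integral_div,
    integral_sub (integrableOn_exp_mul_sin_div_Ioi (inv_pos.2 ht) s)
      (integrableOn_exp_mul_sin_div_Ioi ht s),
    integral_exp_mul_sin_div_Ioi (inv_pos.2 ht), integral_exp_mul_sin_div_Ioi ht, div_inv_eq_mul]

lemma tendsto_lintegral_expKernel_mul {g : ℝ → ℝ} (hg : Measurable g) (hg₀ : ∀ k, 0 ≤ g k) :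
    Tendsto (fun n : ℕ => ∫⁻ k in Ioi (0:ℝ), ENNReal.ofReal (expKernel (n + 1) k * g k)) atTop
      (𝓝 (∫⁻ k in Ioi (0:ℝ), ENNReal.ofReal (g k / (2 * k)))) := by
  refine lintegral_tendsto_of_tendsto_of_monotone
    (fun n => (measurable_expKernel.mul hg).ennreal_ofReal.aemeasurable) ?_ ?_
  all_goals filter_upwards [ae_restrict_mem measurableSet_Ioi] with k (hk : 0 < k)
  · refine monotone_nat_of_le_succ fun n => ENNReal.ofReal_le_ofReal ?_
    gcongr ?_ * _
    · exact hg₀ k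
    · exact expKernel_mono (by positivity) (by push_cast; linarith) hk
  · have hlim := (tendsto_expKernel hk).comp
      (tendsto_atTop_add_const_right _ 1 tendsto_natCast_atTop_atTop)
    simpa [div_eq_inv_mul] using ENNReal.tendsto_ofReal (hlim.mul_const (g k))

lemma integrableOn_expKernel_mul_norm_sq (ht : 1 ≤ t) {g : ℝ → ℂ} (hg : Continuous g)
    {C : ℝ} (hC : ∀ k, ‖g k‖ ≤ C) : IntegrableOn (fun k => expKernel t k * ‖g k‖ ^ 2) (Ioi 0) :=
  (integrableOn_expKernel ht).mul_bdd (c := C ^ 2) (by fun_prop) (.of_forall fun k => by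
    rw [norm_pow, norm_norm]
    exact pow_le_pow_left₀ (norm_nonneg _) (hC k) 2)

lemma tendsto_ofReal_integral_expKernel_mul_norm_sq {g : ℝ → ℂ} (hg : Continuous g) {C : ℝ}
    (hC : ∀ k, ‖g k‖ ≤ C) :
    Tendsto (fun n : ℕ => ENNReal.ofReal (∫ k in Ioi (0:ℝ), expKernel (n + 1) k * ‖g k‖ ^ 2))
      atTop (𝓝 (∫⁻ k in Ioi (0:ℝ), ENNReal.ofReal (‖g k‖ ^ 2 / (2 * k)))) := by
  refine (tendsto_lintegral_expKernel_mul (by fun_prop) fun k => by positivity).congr fun n => ?_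
  refine (ofReal_integral_eq_lintegral_ofReal
    (integrableOn_expKernel_mul_norm_sq (by simp) hg hC) ?_).symm
  filter_upwards [ae_restrict_mem measurableSet_Ioi] with k (hk : 0 < k)
  exact mul_nonneg (expKernel_nonneg (by simp) hk) (by positivity)

end expKernel

lemma exp_I_mul_sub_exp_neg_I_mul (θ : ℂ) :
    Complex.exp (Complex.I * θ) - Complex.exp (-Complex.I * θ) = 2 * Complex.I * Complex.sin θ := by
  rw [Complex.sin, mul_comm Complex.I θ, neg_mul, mul_comm Complex.I θ]
  ring_nf
  rw [Complex.I_sq]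
  ring

lemma StrictMono.sign_sub {x : ℝ → ℝ} (hx : StrictMono x) (a b : ℝ) :
    Real.sign (x a - x b) = Real.sign (a - b) := by
  rcases lt_trichotomy a b with h | rfl | h
  · rw [Real.sign_of_neg (sub_neg.2 (hx h)), Real.sign_of_neg (sub_neg.2 h)]
  · simp
  · rw [Real.sign_of_pos (sub_pos.2 (hx h)), Real.sign_of_pos (sub_pos.2 h)]

section Fk

variable {x : ℝ → ℝ} {f : ℝ → ℂ}

lemma norm_exp_neg_I_mul (k a : ℝ) : ‖Complex.exp (-Complex.I * k * a)‖ = 1 := by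
  simp [Complex.norm_exp]

lemma integrable_mul_exp_phase (hx : Measurable x) (hf : Integrable f) (k : ℝ) :
    Integrable fun y => f y * Complex.exp (-Complex.I * k * x y) :=
  hf.mul_bdd (c := 1) (by fun_prop) (.of_forall fun y => (norm_exp_neg_I_mul k (x y)).le)

lemma continuous_Fk (hx : Measurable x) (hf : Integrable f) : Continuous (Fk x f) := by
  refine continuous_const.mul (continuous_of_dominated
    (fun k => (integrable_mul_exp_phase hx hf k).aestronglyMeasurable) (fun k => ?_) hf.norm
    (.of_forall fun y => by fun_prop))
  exact .of_forall fun y => by rw [norm_mul, norm_exp_neg_I_mul, mul_one]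

lemma norm_Fk_le (k : ℝ) : ‖Fk x f k‖ ≤ (√(2 * Real.pi))⁻¹ * ∫ y, ‖f y‖ := by
  rw [Fk, norm_mul, norm_inv, Complex.norm_real, Real.norm_of_nonneg (Real.sqrt_nonneg _)]
  gcongr
  refine (norm_integral_le_integral_norm _).trans_eq (integral_congr_ae (.of_forall fun y => ?_))
  simp only [norm_mul, norm_exp_neg_I_mul, mul_one]

lemma conj_Fk_mul_Fk (k : ℝ) :
    conj (Fk x f k) * Fk x f k = (2 * Real.pi)⁻¹ *
      ∫ z : ℝ × ℝ, conj (f z.1) * f z.2 * Complex.exp (Complex.I * k * (x z.1 - x z.2)) := by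
  have hconst : conj ((√(2 * Real.pi) : ℂ)⁻¹) * (√(2 * Real.pi) : ℂ)⁻¹ = (2 * Real.pi)⁻¹ := by
    rw [Complex.conj_mul', norm_inv, Complex.norm_real, Real.norm_of_nonneg (Real.sqrt_nonneg _)]
    rw [← Complex.ofReal_pow, inv_pow, Real.sq_sqrt (by positivity)]
  rw [Fk, map_mul, mul_mul_mul_comm, hconst, ← integral_conj, ← integral_prod_mul,
    ← Measure.volume_eq_prod]
  congr 1
  refine integral_congr_ae (.of_forall fun z => ?_)
  simp only [map_mul, ← Complex.exp_conj, map_neg, Complex.conj_I, Complex.conj_ofReal]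
  rw [mul_mul_mul_comm, ← Complex.exp_add]
  ring_nf

lemma integrable_conj_mul_prod (hf : Integrable f) :
    Integrable fun z : ℝ × ℝ => conj (f z.1) * f z.2 := by
  rw [Measure.volume_eq_prod]
  exact (Complex.conjCLE.toContinuousLinearMap.integrable_comp hf).mul_prod hf

lemma norm_Fk_sq_sub_norm_Fk_neg_sq (hx : Measurable x) (hf : Integrable f) (k : ℝ) :
    ((‖Fk x f k‖ ^ 2 - ‖Fk x f (-k)‖ ^ 2 : ℝ) : ℂ) = Real.pi⁻¹ *
      ∫ z : ℝ × ℝ, conj (f z.1) * f z.2 * (Complex.I * Real.sin ((x z.1 - x z.2) * k)) := by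
  have hint : ∀ c : ℝ, Integrable fun z : ℝ × ℝ =>
      conj (f z.1) * f z.2 * Complex.exp (Complex.I * c * (x z.1 - x z.2)) := fun c =>
    (integrable_conj_mul_prod hf).mul_bdd (c := 1) (by fun_prop)
      (.of_forall fun z => by simp [Complex.norm_exp])
  push_cast
  rw [← Complex.conj_mul', ← Complex.conj_mul', conj_Fk_mul_Fk, conj_Fk_mul_Fk, ← mul_sub,
    ← integral_sub (hint k) (hint (-k))]
  have hpt : ∀ z : ℝ × ℝ, conj (f z.1) * f z.2 * Complex.exp (Complex.I * k * (x z.1 - x z.2))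
      - conj (f z.1) * f z.2 * Complex.exp (Complex.I * ((-k : ℝ) : ℂ) * (x z.1 - x z.2))
      = 2 * (conj (f z.1) * f z.2 * (Complex.I * Real.sin ((x z.1 - x z.2) * k))) := by
    intro z
    set Δ : ℂ := x z.1 - x z.2
    push_cast
    rw [← mul_sub, show Complex.I * k * Δ = Complex.I * (Δ * k) by ring,
      show Complex.I * -k * Δ = -Complex.I * (Δ * k) by ring, exp_I_mul_sub_exp_neg_I_mul]
    ring
  simp_rw [hpt, integral_const_mul]
  push_cast
  ring

lemma integrable_expKernel_mul_sin_prod {t : ℝ} (ht : 1 ≤ t) (hx : Measurable x)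
    (hf : Integrable f) :
    Integrable (Function.uncurry fun k (z : ℝ × ℝ) => (expKernel t k : ℂ) *
        (conj (f z.1) * f z.2 * (Complex.I * Real.sin ((x z.1 - x z.2) * k))))
      ((volume.restrict (Ioi 0)).prod volume) := by
  have hc := integrable_conj_mul_prod hf
  refine Integrable.mono' ((integrableOn_expKernel ht).norm.mul_prod hc.norm) ?_
    (.of_forall fun p => ?_)
  · refine (Complex.measurable_ofReal.comp (measurable_expKernel.comp measurable_fst))
      |>.aestronglyMeasurable.mul (hc.aestronglyMeasurable.comp_snd.mul ?_)
    exact Measurable.aestronglyMeasurable (by fun_prop)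
  · simp only [Function.uncurry, norm_mul, Complex.norm_real, Complex.norm_I, one_mul,
      Real.norm_eq_abs]
    exact mul_le_mul_of_nonneg_left
      (mul_le_of_le_one_right (by positivity) (Real.abs_sin_le_one _)) (abs_nonneg _)

lemma integral_expKernel_mul_norm_Fk_sq_sub {t : ℝ} (ht : 1 ≤ t) (hx : Measurable x)
    (hf : Integrable f) :
    ((∫ k in Ioi (0:ℝ), expKernel t k * (‖Fk x f k‖ ^ 2 - ‖Fk x f (-k)‖ ^ 2) : ℝ) : ℂ)
      = Real.pi⁻¹ * ∫ z : ℝ × ℝ, conj (f z.1) * f z.2 * (Complex.I *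
          ((Real.arctan ((x z.1 - x z.2) * t) - Real.arctan ((x z.1 - x z.2) / t)) / 2 : ℝ)) := by
  have hinner : ∀ z : ℝ × ℝ, ∫ k in Ioi (0:ℝ), (expKernel t k : ℂ) *
      (conj (f z.1) * f z.2 * (Complex.I * Real.sin ((x z.1 - x z.2) * k)))
      = conj (f z.1) * f z.2 * (Complex.I *
          ((Real.arctan ((x z.1 - x z.2) * t) - Real.arctan ((x z.1 - x z.2) / t)) / 2 : ℝ)) := by
    intro z
    rw [← integral_expKernel_mul_sin (by linarith), integral_complex_ofReal.symm, ← mul_assoc,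
      ← integral_const_mul]
    refine integral_congr_ae (.of_forall fun k => ?_)
    dsimp only
    rw [Complex.ofReal_mul]
    ring
  calc ((∫ k in Ioi (0:ℝ), expKernel t k * (‖Fk x f k‖ ^ 2 - ‖Fk x f (-k)‖ ^ 2) : ℝ) : ℂ)
      = ∫ k in Ioi (0:ℝ), Real.pi⁻¹ * ∫ z : ℝ × ℝ, (expKernel t k : ℂ) *
          (conj (f z.1) * f z.2 * (Complex.I * Real.sin ((x z.1 - x z.2) * k))) := by
        rw [← integral_complex_ofReal]
        refine integral_congr_ae (.of_forall fun k => ?_)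
        dsimp only
        rw [Complex.ofReal_mul, norm_Fk_sq_sub_norm_Fk_neg_sq hx hf, integral_const_mul]
        ring
    _ = _ := by
        rw [integral_const_mul, integral_integral_swap (integrable_expKernel_mul_sin_prod ht hx hf)]
        simp_rw [hinner]

/-- Its real part is `‖Af̃‖² - ‖Bf̃‖²` for every strictly increasing coordinate map
(`lintegral_norm_Fk_sq_div`). -/
noncomputable def signPairing (f : ℝ → ℂ) : ℂ :=
  ∫ z : ℝ × ℝ, conj (f z.1) * f z.2 * (Complex.I * Real.sign (z.1 - z.2)) / 4

lemma tendsto_integral_mul_arctan_sub (hx : StrictMono x) (hf : Integrable f) :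
    Tendsto (fun t => Real.pi⁻¹ * ∫ z : ℝ × ℝ, conj (f z.1) * f z.2 * (Complex.I *
        ((Real.arctan ((x z.1 - x z.2) * t) - Real.arctan ((x z.1 - x z.2) / t)) / 2 : ℝ)))
      atTop (𝓝 (signPairing f)) := by
  have hxm : Measurable x := hx.monotone.measurable
  have hc := integrable_conj_mul_prod hf
  have hlim : Tendsto (fun t => ∫ z : ℝ × ℝ, conj (f z.1) * f z.2 * (Complex.I *
        ((Real.arctan ((x z.1 - x z.2) * t) - Real.arctan ((x z.1 - x z.2) / t)) / 2 : ℝ)))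
      atTop (𝓝 (∫ z : ℝ × ℝ, conj (f z.1) * f z.2 *
        (Complex.I * (Real.pi / 4 * Real.sign (z.1 - z.2) : ℝ)))) := by
    refine tendsto_integral_filter_of_dominated_convergence
      (fun z => ‖conj (f z.1) * f z.2‖ * Real.pi)
      (.of_forall fun t => hc.aestronglyMeasurable.mul ?_)
      (.of_forall fun t => .of_forall fun z => ?_) (hc.norm.mul_const _) (.of_forall fun z => ?_)
    · exact Measurable.aestronglyMeasurable (by fun_prop)
    · simp only [norm_mul, Complex.norm_I, one_mul, Complex.norm_real, Real.norm_eq_abs, abs_div,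
        abs_two]
      have := abs_arctan_sub_arctan_lt_pi ((x z.1 - x z.2) * t) ((x z.1 - x z.2) / t)
      gcongr
      linarith [Real.pi_pos]
    · rw [← hx.sign_sub z.1 z.2]
      exact tendsto_const_nhds.mul (tendsto_const_nhds.mul (Complex.continuous_ofReal.tendsto _
        |>.comp (tendsto_arctan_mul_sub_arctan_div _)))
  convert hlim.const_mul ((Real.pi⁻¹ : ℝ) : ℂ) using 2
  rw [signPairing, ← integral_const_mul]
  refine integral_congr_ae (.of_forall fun z => ?_)
  have : (Real.pi : ℂ) ≠ 0 := Complex.ofReal_ne_zero.2 Real.pi_ne_zero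
  push_cast
  field_simp

lemma tendsto_integral_expKernel_mul_norm_Fk_sq_sub (hx : StrictMono x) (hf : Integrable f) :
    Tendsto (fun n : ℕ =>
        ∫ k in Ioi (0:ℝ), expKernel (n + 1) k * (‖Fk x f k‖ ^ 2 - ‖Fk x f (-k)‖ ^ 2))
      atTop (𝓝 (signPairing f).re) := by
  have h := (Complex.continuous_re.tendsto _).comp ((tendsto_integral_mul_arctan_sub hx hf).comp
    (tendsto_atTop_add_const_right _ 1 tendsto_natCast_atTop_atTop))
  refine h.congr fun n => ?_
  simp only [Function.comp_apply]
  rw [← integral_expKernel_mul_norm_Fk_sq_sub (by simp) hx.monotone.measurable hf, Complex.ofReal_re]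

lemma lintegral_norm_Fk_sq_div (hx : StrictMono x) (hf : Integrable f) (hNo : No x f ≠ ⊤) :
    ∫⁻ k in Ioi (0:ℝ), ENNReal.ofReal (‖Fk x f k‖ ^ 2 / (2 * k))
      = ENNReal.ofReal ((signPairing f).re + (No x f).toReal) := by
  have hF := continuous_Fk hx.monotone.measurable hf
  have hp := tendsto_ofReal_integral_expKernel_mul_norm_sq hF norm_Fk_le
  have hq := tendsto_ofReal_integral_expKernel_mul_norm_sq (g := fun k => Fk x f (-k))
    (hF.comp continuous_neg) fun k => norm_Fk_le (-k)
  have hq' := (ENNReal.tendsto_toReal hNo).comp hq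
  refine tendsto_nhds_unique hp (ENNReal.tendsto_ofReal
    (((tendsto_integral_expKernel_mul_norm_Fk_sq_sub hx hf).add hq').congr fun n => ?_))
  have hpn := integrableOn_expKernel_mul_norm_sq (t := n + 1) (by simp) hF norm_Fk_le
  have hqn := integrableOn_expKernel_mul_norm_sq (t := n + 1) (g := fun k => Fk x f (-k))
    (by simp) (hF.comp continuous_neg) fun k => norm_Fk_le (-k)
  have hq₀ : 0 ≤ ∫ k in Ioi (0:ℝ), expKernel (n + 1) k * ‖Fk x f (-k)‖ ^ 2 :=
    setIntegral_nonneg measurableSet_Ioi fun k (hk : 0 < k) =>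
      mul_nonneg (expKernel_nonneg (by simp) hk) (by positivity)
  simp only [Function.comp_apply, mul_sub]
  rw [integral_sub hpn hqn, ENNReal.toReal_ofReal hq₀, sub_add_cancel]

lemma No_id_eq_zero (hfp : ∀ᵐ p : ℝ, p ≤ 0 → ft f p = 0) : No id f = 0 := by
  have hneg := (Measure.measurePreserving_neg (volume : Measure ℝ)).quasiMeasurePreserving.ae hfp
  refine (lintegral_congr_ae ?_).trans lintegral_zero
  filter_upwards [ae_restrict_mem measurableSet_Ioi, ae_restrict_of_ae hneg] with k (hk : 0 < k) h
  change ENNReal.ofReal (‖ft f (-k)‖ ^ 2 / (2 * k)) = 0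
  simp [h (by simpa using hk.le)]

lemma signPairing_re_eq_one (hf : Integrable f) (hfp : ∀ᵐ p : ℝ, p ≤ 0 → ft f p = 0)
    (hfn : ∫⁻ p in Ioi (0:ℝ), ENNReal.ofReal (‖ft f p‖ ^ 2 / (2 * p)) = 1) :
    (signPairing f).re = 1 := by
  have h := lintegral_norm_Fk_sq_div strictMono_id hf (by simp [No_id_eq_zero hfp])
  rw [No_id_eq_zero hfp, ENNReal.toReal_zero, add_zero] at h
  exact ENNReal.ofReal_eq_one.1 (h.symm.trans hfn)

lemma lintegral_norm_Fk_sq_div_eq_one_add_No (hx : StrictMono x) (hf : Integrable f)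
    (hfp : ∀ᵐ p : ℝ, p ≤ 0 → ft f p = 0)
    (hfn : ∫⁻ p in Ioi (0:ℝ), ENNReal.ofReal (‖ft f p‖ ^ 2 / (2 * p)) = 1) (hNo : No x f ≠ ⊤) :
    ∫⁻ k in Ioi (0:ℝ), ENNReal.ofReal (‖Fk x f k‖ ^ 2 / (2 * k)) = 1 + No x f := by
  rw [lintegral_norm_Fk_sq_div hx hf hNo, signPairing_re_eq_one hf hfp hfn,
    ENNReal.ofReal_add zero_le_one ENNReal.toReal_nonneg, ENNReal.ofReal_one,
    ENNReal.ofReal_toReal hNo]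

lemma normA_sq (hx : Measurable x) (hf : Integrable f) :
    normA x f ^ 2 = (∫⁻ k in Ioi (0:ℝ), ENNReal.ofReal (‖Fk x f k‖ ^ 2 / (2 * k))).toReal := by
  have h₀ : 0 ≤ᵐ[volume.restrict (Ioi 0)] fun k : ℝ => ‖Fk x f k‖ ^ 2 / (2 * k) := by
    filter_upwards [ae_restrict_mem measurableSet_Ioi] with k (hk : 0 < k)
    positivity
  have hF := continuous_Fk hx hf
  rw [normA, Real.sq_sqrt (integral_nonneg_of_ae h₀),
    integral_eq_lintegral_of_nonneg_ae h₀ (Measurable.aestronglyMeasurable (by fun_prop))]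

-- Also when `normA x f = 0`: then `gclhat x f = 0` by the convention `z / 0 = 0`.
lemma integral_conj_gclhat_mul_Fk (x : ℝ → ℝ) (f : ℝ → ℂ) :
    ∫ k in Ioi (0:ℝ), conj (gclhat x f k) * Fk x f k / (2 * k) = normA x f := by
  have hpt : ∀ k ∈ Ioi (0:ℝ), conj (gclhat x f k) * Fk x f k / (2 * k)
      = ((‖Fk x f k‖ ^ 2 / (2 * k) / normA x f : ℝ) : ℂ) := by
    intro k (hk : 0 < k)
    rw [gclhat, if_pos hk, map_div₀, Complex.conj_ofReal, div_mul_eq_mul_div, Complex.conj_mul']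
    push_cast
    ring
  rw [setIntegral_congr_fun measurableSet_Ioi hpt, integral_complex_ofReal, integral_div,
    normA, Real.div_sqrt]

end Fk

lemma strictMono_xR : StrictMono xR := fun _ _ h =>
  neg_lt_neg (Real.exp_lt_exp.2 (neg_lt_neg h))

lemma strictMono_xC : StrictMono xC := fun _ _ h =>
  neg_lt_neg (Real.log_lt_log (by positivity) (by gcongr))

/-- For `x = x_R` or `x = x_C` and a normalized outgoing wave function `f`
with `N̄_o[f] < ∞`, the classical incoming function `g_cl` satisfies, via Wald's formula
`N̄_{g_cl}[f] = N̄_o[f] + |⟨g̃_cl,Af̃⟩|² + |⟨g̃_cl*,Bf̃⟩|²`, the amplification bound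
`1 + N̄_o[f] ≤ N̄_{g_cl}[f]`. -/
theorem stmt_8 (x : ℝ → ℝ) (hx : x = xR ∨ x = xC) (f : ℝ → ℂ)
    (hf : MeasureTheory.Integrable f)
    (hfp : ∀ᵐ p : ℝ, p ≤ 0 → ft f p = 0)
    (hfn : (∫⁻ p in Set.Ioi (0:ℝ),
        ENNReal.ofReal (‖ft f p‖ ^ 2 / (2 * p))) = 1)
    (hNo : No x f < ⊤) :
    1 + No x f ≤ No x f +
      ENNReal.ofReal (‖∫ k in Set.Ioi (0:ℝ),
          (starRingEnd ℂ) (gclhat x f k) * Fk x f k / (2 * (k : ℂ))‖ ^ 2) +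
      ENNReal.ofReal (‖∫ k in Set.Ioi (0:ℝ),
          gclhat x f k * Fk x f (-k) / (2 * (k : ℂ))‖ ^ 2) := by
  have hxm : StrictMono x := by
    rcases hx with rfl | rfl
    exacts [strictMono_xR, strictMono_xC]
  have hA : ENNReal.ofReal (‖∫ k in Set.Ioi (0:ℝ),
      (starRingEnd ℂ) (gclhat x f k) * Fk x f k / (2 * (k : ℂ))‖ ^ 2) = 1 + No x f := by
    rw [integral_conj_gclhat_mul_Fk, Complex.norm_real, Real.norm_eq_abs, sq_abs,
      normA_sq hxm.monotone.measurable hf,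
      lintegral_norm_Fk_sq_div_eq_one_add_No hxm hf hfp hfn hNo.ne,
      ENNReal.ofReal_toReal (ENNReal.add_ne_top.2 ⟨ENNReal.one_ne_top, hNo.ne⟩)]
  rw [hA]
  exact le_add_self.trans le_self_add
end

section
/- Let x : ℝ → ℝ be three times continuously differentiable with x′(y) > 0 for all y, and let β > 0 and y ∈ ℝ. Then lim_{ε→0} [ 1/(4πε²) − (π/(4β²)) · x′(y) x′(y+ε) / sinh²((π/β)(x(y+ε) − x(y))) ] = −(1/(24π)) S(y) + (π/(12β²)) x′(y)², where S = x‴/x′ − (3/2)(x″/x′)² is the Schwarzian derivative of x. (This is the statement that the outgoing energy-momentum tensor of an incoming thermal state of inverse temperature β equals T̂^Th_{β,in}(y) = T̂_o(y) + x′(y)² · π/(12β²), with T̂_o(y) = −S(y)/(24π) the spontaneous contribution.) -/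
/-!
Write `u(ε) = x(y+ε) - x(y)`, `v(ε) = x'(y+ε)`, `a, b, c` for the first three derivatives of
`x` at `y` and `l = π/β`. Taylor's theorem gives `u = aε + bε²/2 + cε³/6 + o(ε³)`,
`v = a + bε + cε²/2 + o(ε²)` and `sinh² s = s² + s⁴/3 + o(s⁴)`. Hence
`sinh² (l u) - l² ε² a v = (l² (b²/4 - ac/6) + l⁴ a⁴/3) ε⁴ + o(ε⁴)`, while
`sinh² (l u) = l² a² ε² + o(ε²)`, so `1/ε² - l² a v / sinh² (l u)` tends to
`(b²/4 - ac/6)/a² + l² a²/3`, which is `4π` times the claimed limit.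
-/

open MeasureTheory Set Filter
open scoped ENNReal

open Topology
open scoped Nat

theorem tendsto_taylor_remainder_div_pow {f : ℝ → ℝ} {n : ℕ} (hf : ContDiff ℝ n f) (y : ℝ) :
    Tendsto (fun t =>
        (f (y + t) - ∑ k ∈ Finset.range (n + 1), iteratedDeriv k f y / k ! * t ^ k) / t ^ n)
      (𝓝[≠] 0) (𝓝 0) := by
  have h := Real.taylor_tendsto convex_univ (mem_univ y) hf.contDiffOn
  rw [nhdsWithin_univ] at h
  have hshift : Tendsto (fun t => y + t) (𝓝[≠] 0) (𝓝 y) :=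
    tendsto_nhdsWithin_of_tendsto_nhds (by simpa using (continuous_const_add y).tendsto 0)
  refine (h.comp hshift).congr fun t => ?_
  simp [taylor_within_apply, iteratedDerivWithin_univ, div_eq_inv_mul, mul_comm, mul_left_comm]

theorem exists_tendsto_zero_of_tendsto_sub_div_pow {f g : ℝ → ℝ} {n : ℕ}
    (h : Tendsto (fun t => (f t - g t) / t ^ n) (𝓝[≠] 0) (𝓝 0)) :
    ∃ r : ℝ → ℝ, Tendsto r (𝓝[≠] 0) (𝓝 0) ∧ ∀ᶠ t in 𝓝[≠] 0, f t = g t + t ^ n * r t := by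
  refine ⟨_, h, ?_⟩
  filter_upwards [self_mem_nhdsWithin] with t (ht : t ≠ 0)
  field_simp
  ring

theorem tendsto_sinh_sub_self_div_pow_three :
    Tendsto (fun s => (Real.sinh s - s) / s ^ 3) (𝓝[≠] 0) (𝓝 (1 / 6)) := by
  have h := tendsto_taylor_remainder_div_pow (n := 3) Real.contDiff_sinh 0
  simp only [Finset.sum_range_succ, Finset.sum_range_zero, iteratedDeriv_succ,
    iteratedDeriv_zero, Real.deriv_sinh, Real.deriv_cosh, zero_add, Real.sinh_zero,
    Real.cosh_zero] at h
  convert (h.add_const (1 / 6)).congr' ?_ using 2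
  · rw [zero_add]
  filter_upwards [self_mem_nhdsWithin] with s (hs : s ≠ 0)
  norm_num [Nat.factorial]
  field_simp
  ring

theorem tendsto_sinh_sq_sub_sq_div_pow_four :
    Tendsto (fun s => (Real.sinh s ^ 2 - s ^ 2) / s ^ 4) (𝓝[≠] 0) (𝓝 (1 / 3)) := by
  have hid : Tendsto (fun s : ℝ => s) (𝓝[≠] 0) (𝓝 0) :=
    tendsto_nhdsWithin_of_tendsto_nhds tendsto_id
  have h := tendsto_sinh_sub_self_div_pow_three
  -- `sinh² s - s² = (sinh s - s) (sinh s + s)` and `(sinh s + s) / s = 2 + s² (sinh s - s) / s³`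
  convert (h.mul ((h.mul (hid.pow 2)).add_const 2)).congr' ?_ using 2
  · norm_num
  filter_upwards [self_mem_nhdsWithin] with s (hs : s ≠ 0)
  field_simp
  ring

section TaylorData

variable {u v : ℝ → ℝ} {a b c : ℝ}
  (hu : Tendsto (fun t => (u t - (a * t + b / 2 * t ^ 2 + c / 6 * t ^ 3)) / t ^ 3)
    (𝓝[≠] 0) (𝓝 0))
  (hv : Tendsto (fun t => (v t - (a + b * t + c / 2 * t ^ 2)) / t ^ 2) (𝓝[≠] 0) (𝓝 0))
include hu

theorem tendsto_div_self_of_taylor : Tendsto (fun t => u t / t) (𝓝[≠] 0) (𝓝 a) := by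
  obtain ⟨r, hr, hur⟩ := exists_tendsto_zero_of_tendsto_sub_div_pow hu
  have hid : Tendsto (fun t : ℝ => t) (𝓝[≠] 0) (𝓝 0) :=
    tendsto_nhdsWithin_of_tendsto_nhds tendsto_id
  have h : Tendsto (fun t => a + (b / 2 + (c / 6 + r t) * t) * t) (𝓝[≠] 0) (𝓝 a) := by
    simpa using ((((hr.const_add (c / 6)).mul hid).const_add (b / 2)).mul hid).const_add a
  refine h.congr' ?_
  filter_upwards [self_mem_nhdsWithin, hur] with t (ht : t ≠ 0) hut
  rw [hut]
  field_simp
  ring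

include hv

theorem tendsto_div_self_sq_sub_mul_div_sq :
    Tendsto (fun t => ((u t / t) ^ 2 - a * v t) / t ^ 2) (𝓝[≠] 0)
      (𝓝 (b ^ 2 / 4 - a * c / 6)) := by
  obtain ⟨r, hr, hur⟩ := exists_tendsto_zero_of_tendsto_sub_div_pow hu
  obtain ⟨w, hw, hvw⟩ := exists_tendsto_zero_of_tendsto_sub_div_pow hv
  have hid : Tendsto (fun t : ℝ => t) (𝓝[≠] 0) (𝓝 0) :=
    tendsto_nhdsWithin_of_tendsto_nhds tendsto_id
  have h : Tendsto
      (fun t => (b / 2 + (c / 6 + r t) * t) ^ 2 + (2 * a * r t - a * w t - a * c / 6))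
      (𝓝[≠] 0) (𝓝 (b ^ 2 / 4 - a * c / 6)) := by
    convert ((((hr.const_add (c / 6)).mul hid).const_add (b / 2)).pow 2).add
      (((hr.const_mul (2 * a)).sub (hw.const_mul a)).sub_const (a * c / 6)) using 2
    ring
  refine h.congr' ?_
  filter_upwards [self_mem_nhdsWithin, hur, hvw] with t (ht : t ≠ 0) hut hvt
  rw [hut, hvt]
  field_simp
  ring

theorem tendsto_inv_sq_sub_mul_div_sinh_sq {l : ℝ} (ha : a ≠ 0) (hl : l ≠ 0) :
    Tendsto (fun t => 1 / t ^ 2 - l ^ 2 * a * v t / Real.sinh (l * u t) ^ 2) (𝓝[≠] 0)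
      (𝓝 ((b ^ 2 / 4 - a * c / 6) / a ^ 2 + l ^ 2 * a ^ 2 / 3)) := by
  have hid : Tendsto (fun t : ℝ => t) (𝓝[≠] 0) (𝓝 0) :=
    tendsto_nhdsWithin_of_tendsto_nhds tendsto_id
  have hq := tendsto_div_self_of_taylor hu
  have hu0 : ∀ᶠ t in 𝓝[≠] 0, u t ≠ 0 := by
    filter_upwards [hq.eventually_ne ha] with t ht hut
    simp [hut] at ht
  have hs : Tendsto (fun t => l * u t) (𝓝[≠] 0) (𝓝[≠] 0) := by
    refine tendsto_nhdsWithin_iff.mpr ⟨?_, ?_⟩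
    · have h := ((hq.mul hid).const_mul l).congr' <| by
        filter_upwards [self_mem_nhdsWithin] with t (ht : t ≠ 0)
        rw [div_mul_cancel₀ _ ht]
      simpa using h
    · filter_upwards [hu0] with t ht
      exact mul_ne_zero hl ht
  have hK := tendsto_sinh_sq_sub_sq_div_pow_four.comp hs
  -- with `q = u/t` and `K = (sinh² s - s²)/s⁴` at `s = l u`: `sinh² (l u) = t² D` and
  -- `(D - l² a v) / t² = N`, where `N → l² (b²/4 - ac/6) + l⁴ a⁴/3` and `D → l² a²`
  have hN := ((tendsto_div_self_sq_sub_mul_div_sq hu hv).const_mul (l ^ 2)).add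
    ((hK.mul (hq.pow 4)).const_mul (l ^ 4))
  have hD := ((hq.pow 2).const_mul (l ^ 2)).add
    (((hid.pow 2).mul (hK.mul (hq.pow 4))).const_mul (l ^ 4))
  convert (hN.div hD (by simp [ha, hl])).congr' ?_ using 2
  · field_simp
    ring
  filter_upwards [self_mem_nhdsWithin, hu0] with t (ht : t ≠ 0) hut
  simp only [Pi.div_apply, Function.comp_apply]
  have hS : Real.sinh (l * u t) ≠ 0 := Real.sinh_ne_zero.mpr (mul_ne_zero hl hut)
  generalize hK : (Real.sinh (l * u t) ^ 2 - (l * u t) ^ 2) / (l * u t) ^ 4 = K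
  generalize hD : l ^ 2 * (u t / t) ^ 2 + l ^ 4 * (t ^ 2 * (K * (u t / t) ^ 4)) = D
  have hsinh : Real.sinh (l * u t) ^ 2 = t ^ 2 * D := by
    rw [← hD, ← hK]
    field_simp
    ring
  have hN : l ^ 2 * (((u t / t) ^ 2 - a * v t) / t ^ 2) + l ^ 4 * (K * (u t / t) ^ 4) =
      (D - l ^ 2 * a * v t) / t ^ 2 := by
    rw [← hD]
    field_simp
    ring
  have hD0 : D ≠ 0 := by
    rintro rfl
    simp [hS] at hsinh
  rw [hN, hsinh]
  field_simp

end TaylorData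

/-- For a `C³` map `x` with `x' > 0`, `β > 0` and `y ∈ ℝ`, the
point-split, vacuum-subtracted thermal energy-momentum tensor converges as `ε → 0`:
`lim [1/(4πε²) - (π/(4β²)) x'(y)x'(y+ε)/sinh²((π/β)(x(y+ε)-x(y)))]
  = -(1/(24π)) S(y) + (π/(12β²)) x'(y)²`,
where `S = x'''/x' - (3/2)(x''/x')²` is the Schwarzian derivative. -/
theorem stmt_15 (x : ℝ → ℝ) (hx : ContDiff ℝ 3 x) (hx' : ∀ y : ℝ, 0 < deriv x y)
    (β : ℝ) (hβ : 0 < β) (y : ℝ) :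
    Filter.Tendsto
      (fun ε : ℝ =>
        1 / (4 * Real.pi * ε ^ 2) -
          Real.pi / (4 * β ^ 2) * (deriv x y * deriv x (y + ε)) /
            (Real.sinh (Real.pi / β * (x (y + ε) - x y))) ^ 2)
      (nhdsWithin 0 {(0:ℝ)}ᶜ)
      (nhds (-(1 / (24 * Real.pi)) *
          (deriv (deriv (deriv x)) y / deriv x y -
            3 / 2 * (deriv (deriv x) y / deriv x y) ^ 2) +
        Real.pi / (12 * β ^ 2) * (deriv x y) ^ 2)) := by
  have ha : deriv x y ≠ 0 := (hx' y).ne'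
  have hl : Real.pi / β ≠ 0 := by positivity
  have hu : Tendsto (fun t => (x (y + t) - x y - (deriv x y * t + deriv (deriv x) y / 2 * t ^ 2
      + deriv (deriv (deriv x)) y / 6 * t ^ 3)) / t ^ 3) (𝓝[≠] 0) (𝓝 0) := by
    refine (tendsto_taylor_remainder_div_pow hx y).congr fun t => ?_
    simp [Finset.sum_range_succ, iteratedDeriv_succ, Nat.factorial]
    ring
  have hv : Tendsto (fun t => (deriv x (y + t) - (deriv x y + deriv (deriv x) y * t
      + deriv (deriv (deriv x)) y / 2 * t ^ 2)) / t ^ 2) (𝓝[≠] 0) (𝓝 0) := by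
    refine (tendsto_taylor_remainder_div_pow (hx.deriv' (n := 2)) y).congr fun t => ?_
    simp [Finset.sum_range_succ, iteratedDeriv_succ, Nat.factorial]
  -- `π / (4β²) = l² / (4π)` with `l = π / β`
  convert (tendsto_inv_sq_sub_mul_div_sinh_sq hu hv ha hl).const_mul (1 / (4 * Real.pi))
    using 2 with ε
  · field_simp
  · field_simp
    ring
end
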